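/- arXiv:2003.07286 — 10 statements merged into one kernel-verified Lean document; each statement's English description precedes it below -/
import Mathlib

section
/- Let ι be a finite index set, let a be a nonzero pure-imaginary quaternion, let b : ι → ℍ assign to each index a nonzero pure-imaginary quaternion, and let E : ι → ℍ. Assume (closing of the primal surface) that the imaginary parts of the hyperedges sum to zero, i.e. ∑_{j∈ι} (E j − Re(E j)) = 0, and (the discrete isothermic condition with vanishing dual real parts) ∑_{j∈ι} (E j) * (b j − a) = 0. Then: (i) ∑_{j∈ι} conj(a) * (E j) * (b j) = (|a|² ∑_{j∈ι} Re(E j)) · 1, so the transformed hyperedges conj(a)·(E j)·(b j) again close up to a real scalar; and (ii) ∑_{j∈ι} (conj(a) * (E j) * (b j)) * ((b j)⁻¹ − a⁻¹) = 0, i.e. the transformed hyperedges satisfy the isothermic condition with the Möbius-transformed dual points (b j)⁻¹, a⁻¹. (Vertex-wise form of: the Möbius transformation f* ↦ (f*)⁻¹ of the Christoffel dual of a discrete isothermic surface is dual to the isothermic surface with hyperedges Ẽ_ij = conj(f*_i)·E_ij·f*_j.) -/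
/-!
Write `S = ∑ E j`. The isothermic condition `∑ E j * (b j - a) = 0` says `∑ E j * b j = S * a`,
so `∑ c * E j * b j = c * S * a` for every left factor `c`. With `c = conj a` and `S` real by the
closing condition, this is `‖a‖² S`. Multiplying the transformed hyperedges by
`(b j)⁻¹ - a⁻¹` then gives `c * S - c * S * a * a⁻¹ = 0`.
-/

open scoped Quaternion

theorem Finset.sum_mul_mul_eq_mul_sum_mul_of_sum_mul_sub_eq_zero {R ι : Type*} [Ring R]
    (s : Finset ι) (c a : R) (b E : ι → R) (h : ∑ j ∈ s, E j * (b j - a) = 0) :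
    ∑ j ∈ s, c * E j * b j = c * (∑ j ∈ s, E j) * a := by
  have hEb : ∑ j ∈ s, E j * b j = (∑ j ∈ s, E j) * a := by
    simpa only [mul_sub, Finset.sum_sub_distrib, sub_eq_zero, ← Finset.sum_mul] using h
  simp only [mul_assoc, ← Finset.mul_sum, hEb]

theorem Finset.sum_mul_mul_mul_inv_sub_inv_eq_zero {R ι : Type*} [DivisionRing R]
    (s : Finset ι) (c a : R) (b E : ι → R) (ha : a ≠ 0) (hb : ∀ j ∈ s, b j ≠ 0)
    (h : ∑ j ∈ s, E j * (b j - a) = 0) :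
    ∑ j ∈ s, c * E j * b j * ((b j)⁻¹ - a⁻¹) = 0 := by
  have hcancel : ∀ j ∈ s, c * E j * b j * ((b j)⁻¹ - a⁻¹) = c * E j - c * E j * b j * a⁻¹ :=
    fun j hj => by rw [mul_sub, mul_assoc _ (b j), mul_inv_cancel₀ (hb j hj), mul_one]
  rw [Finset.sum_congr rfl hcancel, Finset.sum_sub_distrib, ← Finset.sum_mul,
    Finset.sum_mul_mul_eq_mul_sum_mul_of_sum_mul_sub_eq_zero s c a b E h, ← Finset.mul_sum,
    mul_assoc _ a, mul_inv_cancel₀ ha, mul_one, sub_self]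

namespace Quaternion

theorem star_mul_coe_mul_self (a : ℍ[ℝ]) (r : ℝ) : star a * (r : ℍ[ℝ]) * a = (‖a‖ ^ 2 * r : ℝ) := by
  rw [mul_assoc, coe_commutes, ← mul_assoc, star_mul_self, normSq_eq_norm_mul_self, ← sq, coe_mul]

theorem sum_eq_coe_sum_re_of_sum_sub_re_eq_zero {ι : Type*} (s : Finset ι) (E : ι → ℍ[ℝ])
    (h : ∑ j ∈ s, (E j - ((E j).re : ℍ[ℝ])) = 0) :
    ∑ j ∈ s, E j = ((∑ j ∈ s, (E j).re : ℝ) : ℍ[ℝ]) := by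
  rw [Finset.sum_sub_distrib, sub_eq_zero] at h
  rw [h]
  exact (map_sum (algebraMap ℝ ℍ[ℝ]) (fun j => (E j).re) s).symm

end Quaternion

open Quaternion in
theorem stmt0_general {ι : Type*} [Fintype ι]
    (a : ℍ[ℝ]) (ha : a ≠ 0)
    (b : ι → ℍ[ℝ]) (hb : ∀ j, b j ≠ 0)
    (E : ι → ℍ[ℝ])
    (hclose : ∑ j, (E j - ((E j).re : ℍ[ℝ])) = 0)
    (hiso : ∑ j, E j * (b j - a) = 0) :
    (∑ j, star a * E j * b j = ((‖a‖ ^ 2 * ∑ j, (E j).re : ℝ) : ℍ[ℝ])) ∧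
      ∑ j, (star a * E j * b j) * ((b j)⁻¹ - a⁻¹) = 0 := by
  refine ⟨?_, Finset.sum_mul_mul_mul_inv_sub_inv_eq_zero _ _ a b E ha (fun j _ => hb j) hiso⟩
  rw [Finset.sum_mul_mul_eq_mul_sum_mul_of_sum_mul_sub_eq_zero _ _ a b E hiso,
    sum_eq_coe_sum_re_of_sum_sub_re_eq_zero _ E hclose, star_mul_coe_mul_self]

/-- Vertex-wise form of the Möbius invariance of discrete isothermic surfaces:
the Möbius transformation `f* ↦ (f*)⁻¹` of the Christoffel dual is dual to the
isothermic surface with hyperedges `Ẽ_ij = conj(f*_i) · E_ij · f*_j`. Here `a`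
plays the role of `f*_i`, `b j` of the dual vertices `f*_j`, `E j` of the
hyperedges at the vertex. -/
theorem stmt0 {ι : Type*} [Fintype ι]
    (a : ℍ[ℝ]) (ha : a ≠ 0) (ha' : a.re = 0)
    (b : ι → ℍ[ℝ]) (hb : ∀ j, b j ≠ 0) (hb' : ∀ j, (b j).re = 0)
    (E : ι → ℍ[ℝ])
    (hclose : ∑ j, (E j - ((E j).re : ℍ[ℝ])) = 0)
    (hiso : ∑ j, E j * (b j - a) = 0) :
    (∑ j, star a * E j * b j = ((‖a‖ ^ 2 * ∑ j, (E j).re : ℝ) : ℍ[ℝ])) ∧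
      ∑ j, (star a * E j * b j) * ((b j)⁻¹ - a⁻¹) = 0 :=
  stmt0_general a ha b hb E hclose hiso
end

section
/- Let ι be a finite index set, let n ∈ ℍ be a pure-imaginary quaternion with |n| = 1, let m : ι → ℍ assign to each index a pure-imaginary quaternion with |m j| = 1, and let E : ι → ℍ with every E j nonzero (hence invertible). Assume the normal-transport relation (E j)⁻¹ * n * (E j) = −(m j) for every j ∈ ι, and assume ∑_{j∈ι} E j = 0 (which combines the minimality condition that the real parts of the hyperedges sum to zero with the closedness of the surface edges). Then ∑_{j∈ι} (E j) * (m j − n) = 0. In other words, a face-edge-constraint discrete minimal surface satisfies the discrete isothermic condition with its face normal as Christoffel dual. -/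
open scoped Quaternion

theorem mul_eq_neg_mul_of_inv_mul_mul_eq_neg {K : Type*} [DivisionRing K] {a n m : K}
    (ha : a ≠ 0) (h : a⁻¹ * n * a = -m) : a * m = -(n * a) := by
  rw [mul_assoc, inv_mul_eq_iff_eq_mul₀ ha] at h
  rw [h, mul_neg, neg_neg]

theorem Finset.sum_mul_sub_eq_zero_of_mul_eq_neg_mul {ι R : Type*} [Ring R] (s : Finset ι)
    {n : R} {m E : ι → R} (hE : ∀ j ∈ s, E j * m j = -(n * E j)) (hsum : ∑ j ∈ s, E j = 0) :
    ∑ j ∈ s, E j * (m j - n) = 0 :=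
  calc ∑ j ∈ s, E j * (m j - n)
      = ∑ j ∈ s, (-(n * E j) - E j * n) :=
        Finset.sum_congr rfl fun j hj => by rw [mul_sub, hE j hj]
    _ = -(n * ∑ j ∈ s, E j) - (∑ j ∈ s, E j) * n := by
        rw [Finset.sum_sub_distrib, Finset.sum_neg_distrib, Finset.mul_sum, Finset.sum_mul]
    _ = 0 := by rw [hsum, mul_zero, zero_mul, neg_zero, sub_zero]

theorem stmt1_general {ι : Type*} [Fintype ι]
    (n : ℍ[ℝ])
    (m : ι → ℍ[ℝ])
    (E : ι → ℍ[ℝ]) (hE : ∀ j, E j ≠ 0)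
    (htrans : ∀ j, (E j)⁻¹ * n * E j = -(m j))
    (hsum : ∑ j, E j = 0) :
    ∑ j, E j * (m j - n) = 0 :=
  Finset.univ.sum_mul_sub_eq_zero_of_mul_eq_neg_mul
    (fun j _ => mul_eq_neg_mul_of_inv_mul_mul_eq_neg (hE j) (htrans j)) hsum

/-- A face-edge-constraint discrete minimal surface satisfies the discrete
isothermic condition with its face normal as Christoffel dual: `n` is the
normal at the central vertex, `m j` the normals on the adjacent faces, and
`E j` the hyperedges `2𝐇_ij + df_ij` at the vertex. -/
theorem stmt1 {ι : Type*} [Fintype ι]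
    (n : ℍ[ℝ]) (hn : n.re = 0) (hn1 : ‖n‖ = 1)
    (m : ι → ℍ[ℝ]) (hm : ∀ j, (m j).re = 0) (hm1 : ∀ j, ‖m j‖ = 1)
    (E : ι → ℍ[ℝ]) (hE : ∀ j, E j ≠ 0)
    (htrans : ∀ j, (E j)⁻¹ * n * E j = -(m j))
    (hsum : ∑ j, E j = 0) :
    ∑ j, E j * (m j - n) = 0 :=
  stmt1_general n m E hE htrans hsum
end

section
/- Let z0, z1, z2, z3 ∈ ℂ satisfy z0 ≠ z1, z1 ≠ z2, z2 ≠ z3, z3 ≠ z0 and z0 ≠ z2, and let α1, α2 ∈ ℂ. Then the cross-ratio relation α2·(z0 − z1)·(z2 − z3) = α1·(z1 − z2)·(z3 − z0) holds if and only if the three-leg relation α1/(z0 − z1) − α2/(z0 − z3) = (α1 − α2)/(z0 − z2) holds. -/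
theorem stmt2_general (z0 z1 z2 z3 : ℂ)
    (h01 : z0 ≠ z1) (h30 : z3 ≠ z0)
    (h02 : z0 ≠ z2) (α1 α2 : ℂ) :
    α2 * (z0 - z1) * (z2 - z3) = α1 * (z1 - z2) * (z3 - z0) ↔
      α1 / (z0 - z1) - α2 / (z0 - z3) = (α1 - α2) / (z0 - z2) := by
  have h1 : z0 - z1 ≠ 0 := sub_ne_zero.mpr h01
  have h3 : z0 - z3 ≠ 0 := sub_ne_zero.mpr h30.symm
  have h2 : z0 - z2 ≠ 0 := sub_ne_zero.mpr h02
  rw [div_sub_div _ _ h1 h3, div_eq_div_iff (mul_ne_zero h1 h3) h2]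
  -- Once the denominators are cleared, the two relations are the same polynomial identity.
  constructor <;> intro h <;> linear_combination h

/-- Equivalence of the cross-ratio relation and the three-leg relation on an
elementary quadrilateral. -/
theorem stmt2 (z0 z1 z2 z3 : ℂ)
    (h01 : z0 ≠ z1) (h12 : z1 ≠ z2) (h23 : z2 ≠ z3) (h30 : z3 ≠ z0)
    (h02 : z0 ≠ z2) (α1 α2 : ℂ) :
    α2 * (z0 - z1) * (z2 - z3) = α1 * (z1 - z2) * (z3 - z0) ↔
      α1 / (z0 - z1) - α2 / (z0 - z3) = (α1 - α2) / (z0 - z2) :=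
  stmt2_general z0 z1 z2 z3 h01 h30 h02 α1 α2
end

section
/- Let n ≥ 1, let z0 ∈ ℂ, and let w, b : ZMod n → ℂ and α : ZMod n → ℂ be given (w k are the 'white' neighbours, b k the 'black' neighbours of z0, and α k the edge labels, indexed cyclically). Assume for every k ∈ ZMod n: z0 ≠ w k, w k ≠ b k, b k ≠ w (k+1), w (k+1) ≠ z0, z0 ≠ b k, and the cross-ratio relation α (k+1) · (z0 − w k) · (b k − w (k+1)) = α k · (w k − b k) · (w (k+1) − z0) for the elementary quadrilateral (z0, w k, b k, w (k+1)) with labels α k, α (k+1). Then the additive rational Toda equation holds at z0: ∑_{k ∈ ZMod n} (α k − α (k+1))/(z0 − b k) = 0. -/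
/-! The cross-ratio relation on the quadrilateral `(z₀, w k, b k, w (k+1))` can be rewritten in
three-leg form `(α k - α (k+1)) / (z₀ - b k) = α k / (z₀ - w k) - α (k+1) / (z₀ - w (k+1))`,
whose right-hand side telescopes to zero around the cyclic star of `z₀`. -/

theorem three_leg_of_cross_ratio {K : Type*} [Field K] {z w b w' α α' : K}
    (hw : z ≠ w) (hw' : z ≠ w') (hb : z ≠ b)
    (hcr : α' * (z - w) * (b - w') = α * (w - b) * (w' - z)) :
    (α - α') / (z - b) = α / (z - w) - α' / (z - w') := by
  rw [div_sub_div _ _ (sub_ne_zero.mpr hw) (sub_ne_zero.mpr hw'),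
    div_eq_div_iff (sub_ne_zero.mpr hb) (mul_ne_zero (sub_ne_zero.mpr hw) (sub_ne_zero.mpr hw'))]
  linear_combination -hcr

theorem Fintype.sum_sub_add_right_eq_zero {G M : Type*} [AddGroup G] [Fintype G]
    [AddCommGroup M] (f : G → M) (c : G) : ∑ k, (f k - f (k + c)) = 0 := by
  rw [Finset.sum_sub_distrib, Fintype.sum_equiv (Equiv.addRight c) (fun k => f (k + c)) f
    fun _ => rfl, sub_self]

theorem stmt3_general (n : ℕ) [NeZero n] (z0 : ℂ) (w b α : ZMod n → ℂ)
    (h1 : ∀ k, z0 ≠ w k) (h5 : ∀ k, z0 ≠ b k)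
    (hcr : ∀ k, α (k + 1) * (z0 - w k) * (b k - w (k + 1)) =
      α k * (w k - b k) * (w (k + 1) - z0)) :
    ∑ k : ZMod n, (α k - α (k + 1)) / (z0 - b k) = 0 := by
  calc ∑ k : ZMod n, (α k - α (k + 1)) / (z0 - b k)
      = ∑ k : ZMod n, (α k / (z0 - w k) - α (k + 1) / (z0 - w (k + 1))) :=
        Finset.sum_congr rfl fun k _ => three_leg_of_cross_ratio (h1 k) (h1 (k + 1)) (h5 k) (hcr k)
    _ = 0 := Fintype.sum_sub_add_right_eq_zero (fun k => α k / (z0 - w k)) 1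

/-- Summing the three-leg forms of the cross-ratio system around a vertex of a
quad-graph yields the additive rational Toda equation at that vertex. -/
theorem stmt3 (n : ℕ) [NeZero n] (z0 : ℂ) (w b α : ZMod n → ℂ)
    (h1 : ∀ k, z0 ≠ w k) (h2 : ∀ k, w k ≠ b k) (h3 : ∀ k, b k ≠ w (k + 1))
    (h4 : ∀ k, w (k + 1) ≠ z0) (h5 : ∀ k, z0 ≠ b k)
    (hcr : ∀ k, α (k + 1) * (z0 - w k) * (b k - w (k + 1)) =
      α k * (w k - b k) * (w (k + 1) - z0)) :
    ∑ k : ZMod n, (α k - α (k + 1)) / (z0 - b k) = 0 :=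
  stmt3_general n z0 w b α h1 h5 hcr
end

section
/- Let H ∈ ℝ be nonzero, let z0, z1, z2, z3 ∈ ℂ with z0 ≠ z1, z1 ≠ z2, z2 ≠ z3, z3 ≠ z0, and let α1, α2 ∈ ℂ. For w ≠ w' in ℂ, β ∈ ℂ and λ ∈ ℂ \ {0}, define the 2×2 complex matrix L(w, w', β)(λ) with rows (1, H(w − w')λ⁻¹) and ((β/(w − w'))·λ⁻¹, 1). Then the compatibility condition L(z1, z2, α2)(λ) · L(z0, z1, α1)(λ) = L(z3, z2, α1)(λ) · L(z0, z3, α2)(λ) holds for all λ ∈ ℂ \ {0} if and only if the cross-ratio relation α2(z0 − z1)(z2 − z3) = α1(z1 − z2)(z3 − z0) holds. -/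
/-!
Composing two edge potentials along a path `x → y → z` gives
`1 + λ⁻¹ N + λ⁻² D` with `D` diagonal, and the `(0, 1)` entry of `N` is `H (x - z)`, independent of
the middle vertex. Comparing the two paths around the quadrilateral, each diagonal entry of `D`
is equivalent to the cross-ratio relation (the `(0, 0)` entry carries the factor `H ≠ 0`), and the
relation also forces the remaining entry of `N` to agree.
-/

open Matrix

/-- The (unnormalized) discrete holomorphic potential of an edge from vertex
value `w` to vertex value `w'`, with Hopf differential label `β` and mean
curvature parameter `H`, evaluated at the loop parameter `l`. -/
noncomputable def Lpot (H : ℝ) (w w' β : ℂ) (l : ℂ) : Matrix (Fin 2) (Fin 2) ℂ :=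
  !![1, (H : ℂ) * (w - w') * l⁻¹;
     (β / (w - w')) * l⁻¹, 1]

theorem Lpot_mul_Lpot (H : ℝ) (x y z β γ l : ℂ) :
    Lpot H y z β l * Lpot H x y γ l =
      !![1 + H * ((y - z) * (γ / (x - y))) * l⁻¹ ^ 2, H * (x - z) * l⁻¹;
         (β / (y - z) + γ / (x - y)) * l⁻¹, 1 + H * ((x - y) * (β / (y - z))) * l⁻¹ ^ 2] := by
  ext i j
  fin_cases i <;> fin_cases j <;> simp [Lpot, Matrix.mul_apply] <;> ring

section CrossRatio

variable {z0 z1 z2 z3 : ℂ} (α1 α2 : ℂ)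

theorem cross_ratio_iff_left (h01 : z0 ≠ z1) (h30 : z3 ≠ z0) :
    (z1 - z2) * (α1 / (z0 - z1)) = (z3 - z2) * (α2 / (z0 - z3)) ↔
      α2 * (z0 - z1) * (z2 - z3) = α1 * (z1 - z2) * (z3 - z0) := by
  have := sub_ne_zero.2 h01
  have := sub_ne_zero.2 h30.symm
  field_simp
  constructor <;> intro h <;> linear_combination h

theorem cross_ratio_iff_right (h12 : z1 ≠ z2) (h23 : z2 ≠ z3) :
    (z0 - z1) * (α2 / (z1 - z2)) = (z0 - z3) * (α1 / (z3 - z2)) ↔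
      α2 * (z0 - z1) * (z2 - z3) = α1 * (z1 - z2) * (z3 - z0) := by
  have := sub_ne_zero.2 h12
  have := sub_ne_zero.2 h23.symm
  field_simp
  constructor <;> intro h <;> linear_combination -h

theorem sum_div_eq_of_cross_ratio (h01 : z0 ≠ z1) (h12 : z1 ≠ z2) (h23 : z2 ≠ z3)
    (h30 : z3 ≠ z0) (h : α2 * (z0 - z1) * (z2 - z3) = α1 * (z1 - z2) * (z3 - z0)) :
    α2 / (z1 - z2) + α1 / (z0 - z1) = α1 / (z3 - z2) + α2 / (z0 - z3) := by
  have := sub_ne_zero.2 h01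
  have := sub_ne_zero.2 h12
  have := sub_ne_zero.2 h23.symm
  have := sub_ne_zero.2 h30.symm
  field_simp
  linear_combination (-(z0 - z1 + z2 - z3)) * h

end CrossRatio

/-- The compatibility condition of the discrete holomorphic potential around an
elementary quadrilateral is equivalent to the cross-ratio relation. -/
theorem stmt5 (H : ℝ) (hH : H ≠ 0) (z0 z1 z2 z3 : ℂ)
    (h01 : z0 ≠ z1) (h12 : z1 ≠ z2) (h23 : z2 ≠ z3) (h30 : z3 ≠ z0)
    (α1 α2 : ℂ) :
    (∀ l : ℂ, l ≠ 0 →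
        Lpot H z1 z2 α2 l * Lpot H z0 z1 α1 l =
          Lpot H z3 z2 α1 l * Lpot H z0 z3 α2 l) ↔
      α2 * (z0 - z1) * (z2 - z3) = α1 * (z1 - z2) * (z3 - z0) := by
  simp_rw [Lpot_mul_Lpot]
  constructor
  · intro h
    have entry00 := congrFun (congrFun (h 1 one_ne_zero) 0) 0
    simp only [of_apply, cons_val', cons_val_zero, empty_val', cons_val_fin_one, inv_one,
      one_pow, mul_one, add_right_inj] at entry00
    exact (cross_ratio_iff_left α1 α2 h01 h30).1
      (mul_left_cancel₀ (Complex.ofReal_ne_zero.2 hH) entry00)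
  · intro h l _
    rw [(cross_ratio_iff_left α1 α2 h01 h30).2 h, (cross_ratio_iff_right α1 α2 h12 h23).2 h,
      sum_div_eq_of_cross_ratio α1 α2 h01 h12 h23 h30 h]
end

section
/- Let H ∈ ℝ be nonzero, α1 ∈ ℂ, and z0, z1, z0*, z1* ∈ ℂ with z1 ≠ z0 and H(z0* − z1*)(z1 − z0) = α1 (the duality relation along the edge). Then for every λ ∈ ℂ \ {0}, the product of 2×2 complex matrices A*(z0*)·L·A(z1)⁻¹ equals the matrix with rows (1, −Hz0·λ⁻¹) and (−Hz1*·λ⁻¹, 1 + H(Hz0z1* − α1)λ⁻²), where A*(w) has rows (1, 0), (−Hw·λ⁻¹, 1), A(w) has rows (1, Hw·λ⁻¹), (0, 1), and L has rows (1, H(z1 − z0)λ⁻¹), (H(z0* − z1*)λ⁻¹, 1). In particular, the gauged transition matrix A*(z0*)·L·A(z1)⁻¹ depends only on z0, z1* (and H, α1, λ), and not on z0* and z1 individually. -/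
open Matrix

theorem Matrix.inv_upper_unitriangular_fin_two {R : Type*} [CommRing R] (b : R) :
    (!![1, b; 0, 1] : Matrix (Fin 2) (Fin 2) R)⁻¹ = !![1, -b; 0, 1] := by
  apply inv_eq_right_inv
  simp [one_fin_two]

-- `c` stands for `λ⁻¹`.
theorem gauged_edge_transition_eq {R : Type*} [CommRing R] (h c z0 z1 z0s z1s : R) :
    !![1, 0; -h * z0s * c, 1] * !![1, h * (z1 - z0) * c; h * (z0s - z1s) * c, 1] *
        !![1, -(h * z1 * c); 0, 1] =
      !![1, -h * z0 * c;
         -h * z1s * c, 1 + h * (h * z0 * z1s - h * (z0s - z1s) * (z1 - z0)) * c ^ 2] := by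
  rw [mul_fin_two, mul_fin_two]
  ext i j; fin_cases i <;> fin_cases j <;> simp <;> ring

theorem stmt6_general (H : ℝ) (α1 : ℂ) (z0 z1 z0s z1s : ℂ)
    (hdual : (H : ℂ) * (z0s - z1s) * (z1 - z0) = α1) :
    ∀ l : ℂ, l ≠ 0 →
      (!![1, 0; -(H : ℂ) * z0s * l⁻¹, 1] : Matrix (Fin 2) (Fin 2) ℂ) *
          !![1, (H : ℂ) * (z1 - z0) * l⁻¹; (H : ℂ) * (z0s - z1s) * l⁻¹, 1] *
          (!![1, (H : ℂ) * z1 * l⁻¹; 0, 1] : Matrix (Fin 2) (Fin 2) ℂ)⁻¹ =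
        !![1, -(H : ℂ) * z0 * l⁻¹;
           -(H : ℂ) * z1s * l⁻¹,
           1 + (H : ℂ) * ((H : ℂ) * z0 * z1s - α1) * (l⁻¹) ^ 2] := by
  intro l _
  rw [inv_upper_unitriangular_fin_two, gauged_edge_transition_eq, hdual]

/-- The gauged transition matrix `A*(z0*)·L·A(z1)⁻¹` of the discrete
holomorphic potential depends only on `z0` and `z1*` (and `H`, `α1`, `λ`), not
on `z0*` and `z1` individually. -/
theorem stmt6 (H : ℝ) (hH : H ≠ 0) (α1 : ℂ) (z0 z1 z0s z1s : ℂ)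
    (hz : z1 ≠ z0)
    (hdual : (H : ℂ) * (z0s - z1s) * (z1 - z0) = α1) :
    ∀ l : ℂ, l ≠ 0 →
      (!![1, 0; -(H : ℂ) * z0s * l⁻¹, 1] : Matrix (Fin 2) (Fin 2) ℂ) *
          !![1, (H : ℂ) * (z1 - z0) * l⁻¹; (H : ℂ) * (z0s - z1s) * l⁻¹, 1] *
          (!![1, (H : ℂ) * z1 * l⁻¹; 0, 1] : Matrix (Fin 2) (Fin 2) ℂ)⁻¹ =
        !![1, -(H : ℂ) * z0 * l⁻¹;
           -(H : ℂ) * z1s * l⁻¹,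
           1 + (H : ℂ) * ((H : ℂ) * z0 * z1s - α1) * (l⁻¹) ^ 2] :=
  stmt6_general H α1 z0 z1 z0s z1s hdual
end

section
/- Let E01, E12, E32, E03 be quaternions and set E02 := E32 − conj(E03). (i) If |E01| = |E32|, E12 * E01 = E32 * E03, and E02 = E01 − conj(E12), then E02 * conj(E32) = conj(E01) * E02. (ii) If |E12| = |E03|, E01 * E12 = E03 * E32, and E02 = E01 − conj(E12), then E02 * E12 = E03 * E02. (These are the quaternionic closing identities: together with the norm equalities they say that the opposite hyperedges of an elementary quadrilateral are related by conjugation with the diagonal hyperedge E02, which yields the defining equations f*3 − f2 = E02⁻¹(f0 − f*1)E02 and f*3 − f0 = E02⁻¹(f2 − f*1)E02 of a discrete CMC pair.) -/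
/-!
Equal norms make `star a * a` and `b * star b` the same real scalar, so after this
substitution each closing identity is a three-term computation in the ring ℍ: expand
`E02` by one of its two descriptions, apply the product relation (or its conjugate
`star E01 * star E12 = star E03 * star E32`), and fold back with the other description.
-/

open scoped Quaternion

theorem Quaternion.star_mul_self_eq_mul_star_of_norm_eq {a b : ℍ[ℝ]} (h : ‖a‖ = ‖b‖) :
    star a * a = b * star b := by
  rw [Quaternion.star_mul_self, Quaternion.self_mul_star, Quaternion.normSq_eq_norm_mul_self,
    Quaternion.normSq_eq_norm_mul_self, h]

section ClosingIdentities

variable {R : Type*} [Ring R] [StarMul R] {e01 e12 e32 e03 e02 : R}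

theorem diagonal_mul_star_eq_star_mul_diagonal (h32 : e02 = e32 - star e03)
    (h01 : e02 = e01 - star e12) (hnorm : star e01 * e01 = e32 * star e32)
    (hmul : e12 * e01 = e32 * e03) :
    e02 * star e32 = star e01 * e02 :=
  calc e02 * star e32 = e32 * star e32 - star (e32 * e03) := by rw [h32, sub_mul, star_mul]
    _ = star e01 * e01 - star e01 * star e12 := by rw [hnorm, ← hmul, star_mul]
    _ = star e01 * e02 := by rw [h01, mul_sub]

theorem diagonal_mul_eq_mul_diagonal (h32 : e02 = e32 - star e03)
    (h01 : e02 = e01 - star e12) (hnorm : star e12 * e12 = e03 * star e03)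
    (hmul : e01 * e12 = e03 * e32) :
    e02 * e12 = e03 * e02 :=
  calc e02 * e12 = e01 * e12 - star e12 * e12 := by rw [h01, sub_mul]
    _ = e03 * e32 - e03 * star e03 := by rw [hmul, hnorm]
    _ = e03 * e02 := by rw [h32, mul_sub]

end ClosingIdentities

/-- Quaternionic closing identities for the hyperedges of an elementary
quadrilateral: together with the norm equalities they say the opposite
hyperedges are related by conjugation with the diagonal hyperedge `E02`. -/
theorem stmt8 (E01 E12 E32 E03 E02 : ℍ[ℝ])
    (hE02 : E02 = E32 - star E03) :
    ((‖E01‖ = ‖E32‖ → E12 * E01 = E32 * E03 → E02 = E01 - star E12 →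
        E02 * star E32 = star E01 * E02) ∧
      (‖E12‖ = ‖E03‖ → E01 * E12 = E03 * E32 → E02 = E01 - star E12 →
        E02 * E12 = E03 * E02)) :=
  ⟨fun hnorm hmul h01 => diagonal_mul_star_eq_star_mul_diagonal hE02 h01
      (Quaternion.star_mul_self_eq_mul_star_of_norm_eq hnorm) hmul,
    fun hnorm hmul h01 => diagonal_mul_eq_mul_diagonal hE02 h01
      (Quaternion.star_mul_self_eq_mul_star_of_norm_eq hnorm) hmul⟩
end

section
/- Let H ∈ ℝ and α1, α2 ∈ ℂ; for each edge label e ∈ {01, 12, 32, 03} let d_e, u_e ∈ ℂ with u_e ≠ 0, set α_{01} = α_{32} = α1 and α_{12} = α_{03} = α2, and for λ ∈ ℂ \ {0} define U_e(λ) = matrix with rows (d_e, λ⁻¹Hu_e − λ·conj(α_e)/conj(u_e)) and (λ⁻¹α_e/u_e − λH·conj(u_e), conj(d_e)). Then U_{12}(λ)·U_{01}(λ) = U_{32}(λ)·U_{03}(λ) holds for all λ ∈ ℂ \ {0} if and only if the following four conditions hold: (1) H²(conj(u_{03})u_{32} − conj(u_{01})u_{12}) + d_{12}d_{01} − d_{32}d_{03}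 + conj(α1)α2/(u_{03}·conj(u_{32})) − α1·conj(α2)/(u_{01}·conj(u_{12})) = 0; (2) H·(α1·u_{12}·u_{03} − α2·u_{01}·u_{32}) = 0; (3) H·(−d_{12}u_{01} − conj(d_{01})u_{12} + d_{32}u_{03} + conj(d_{03})u_{32}) = 0; (4) α2·u_{01}·u_{32}·(d_{01}u_{03} − conj(d_{32})u_{12}) = α1·u_{12}·u_{03}·(d_{03}u_{01} − conj(d_{12})u_{32}). -/
open Matrix Complex

/-- The transition matrix of the extended frame of a discrete CMC surface with
mean curvature parameter `H`, edge data `d`, `u` and Hopf differential label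
`α`, evaluated at the loop parameter `l`. -/
noncomputable def UedgeL (H : ℝ) (d u α : ℂ) (l : ℂ) : Matrix (Fin 2) (Fin 2) ℂ :=
  !![d, l⁻¹ * (H : ℂ) * u - l * (starRingEnd ℂ α) / (starRingEnd ℂ u);
     l⁻¹ * α / u - l * (H : ℂ) * (starRingEnd ℂ u), starRingEnd ℂ d]

/-!
Each factor satisfies the reality condition `U(λ) = adj (U(1/λ̄)ᴴ)` of an `SU(2)`-loop, and so do
both sides of the compatibility condition; hence it suffices to compare their first rows. The
`(0,0)` entries are Laurent polynomials in `λ` supported on `λ⁻², 1, λ²`, the `(0,1)` entries on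
`λ⁻¹, λ`. Comparing the five coefficients and clearing denominators gives the four conditions:
the `λ²` coefficient is the conjugate of the `λ⁻²` one (both give (2)), and the `λ` coefficient
of the `(0,1)` entry is the conjugate of (4).
-/

open ComplexConjugate

section Laurent

variable {K : Type*} [Field K] [CharZero K]

theorem forall_ne_zero_laurent_odd_eq_iff {a b a' b' : K} :
    (∀ l : K, l ≠ 0 → a * l⁻¹ + b * l = a' * l⁻¹ + b' * l) ↔ a = a' ∧ b = b' := by
  refine ⟨fun h => ?_, fun ⟨ha, hb⟩ _ _ => by rw [ha, hb]⟩
  have h1 := h 1 one_ne_zero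
  have h2 := h 2 two_ne_zero
  norm_num at h1 h2
  constructor
  · linear_combination (4 / 3 : K) * h1 - (2 / 3 : K) * h2
  · linear_combination (-1 / 3 : K) * h1 + (2 / 3 : K) * h2

theorem forall_ne_zero_laurent_even_eq_iff {a b c a' b' c' : K} :
    (∀ l : K, l ≠ 0 → a * l⁻¹ ^ 2 + b + c * l ^ 2 = a' * l⁻¹ ^ 2 + b' + c' * l ^ 2) ↔
      a = a' ∧ b = b' ∧ c = c' := by
  refine ⟨fun h => ?_, fun ⟨ha, hb, hc⟩ _ _ => by rw [ha, hb, hc]⟩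
  have h1 := h 1 one_ne_zero
  have h2 := h 2 two_ne_zero
  have h3 := h 3 three_ne_zero
  norm_num at h1 h2 h3
  refine ⟨?_, ?_, ?_⟩
  · linear_combination (3 / 2 : K) * h1 - (12 / 5 : K) * h2 + (9 / 10 : K) * h3
  · linear_combination (-13 / 24 : K) * h1 + (8 / 3 : K) * h2 - (9 / 8 : K) * h3
  · linear_combination (1 / 24 : K) * h1 - (4 / 15 : K) * h2 + (9 / 40 : K) * h3

end Laurent

/-- On the unit circle, where `(conj l)⁻¹ = l`, this says `X l * (X l)ᴴ` is a scalar matrix. -/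
def SatisfiesReality (X : ℂ → Matrix (Fin 2) (Fin 2) ℂ) : Prop :=
  ∀ l, X l = adjugate (X (conj l)⁻¹)ᴴ

theorem adjugate_conjTranspose_mul {n R : Type*} [Fintype n] [DecidableEq n] [CommRing R]
    [StarRing R] (A B : Matrix n n R) :
    adjugate (A * B)ᴴ = adjugate Aᴴ * adjugate Bᴴ := by
  rw [conjTranspose_mul, adjugate_mul_distrib]

theorem SatisfiesReality.mul {X Y : ℂ → Matrix (Fin 2) (Fin 2) ℂ} (hX : SatisfiesReality X)
    (hY : SatisfiesReality Y) : SatisfiesReality (fun l => X l * Y l) := fun l => by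
  rw [adjugate_conjTranspose_mul, ← hX, ← hY]

theorem SatisfiesReality.forall_ne_zero_eq_iff {X Y : ℂ → Matrix (Fin 2) (Fin 2) ℂ}
    (hX : SatisfiesReality X) (hY : SatisfiesReality Y) :
    (∀ l, l ≠ 0 → X l = Y l) ↔ ∀ l, l ≠ 0 → X l 0 0 = Y l 0 0 ∧ X l 0 1 = Y l 0 1 := by
  refine ⟨fun h l hl => by simp [h l hl], fun h l hl => ?_⟩
  have h' := h (conj l)⁻¹ (by simpa using hl)
  ext i j
  fin_cases i
  · fin_cases j <;> simp [h l hl]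
  · rw [hX, hY, adjugate_fin_two, adjugate_fin_two]
    fin_cases j <;> simp [h']

theorem satisfiesReality_UedgeL (H : ℝ) (d u α : ℂ) : SatisfiesReality (UedgeL H d u α) := by
  intro l
  rw [adjugate_fin_two]
  ext i j
  fin_cases i <;> fin_cases j <;> simp [UedgeL]

section Entries

variable {H : ℝ} {d u α d' u' α' e v β e' v' β' : ℂ} {l : ℂ}

theorem UedgeL_mul_UedgeL_apply_zero_zero (hl : l ≠ 0) :
    (UedgeL H d u α l * UedgeL H d' u' α' l) 0 0 =
      H * u * α' / u' * l⁻¹ ^ 2 + (d * d' - H ^ 2 * u * conj u' - conj α * α' / (conj u * u')) +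
        H * conj α * conj u' / conj u * l ^ 2 := by
  simp only [UedgeL, Matrix.mul_apply, Fin.sum_univ_two, of_apply, cons_val', cons_val_fin_one,
    cons_val_zero, cons_val_one]
  field_simp
  ring

theorem UedgeL_mul_UedgeL_apply_zero_one :
    (UedgeL H d u α l * UedgeL H d' u' α' l) 0 1 =
      H * (d * u' + u * conj d') * l⁻¹ +
        -(d * conj α' / conj u' + conj α * conj d' / conj u) * l := by
  simp only [UedgeL, Matrix.mul_apply, Fin.sum_univ_two, of_apply, cons_val', cons_val_fin_one,
    cons_val_zero, cons_val_one]
  ring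

theorem forall_ne_zero_UedgeL_mul_UedgeL_apply_zero_zero_eq_iff :
    (∀ l, l ≠ 0 → (UedgeL H d u α l * UedgeL H d' u' α' l) 0 0 =
        (UedgeL H e v β l * UedgeL H e' v' β' l) 0 0) ↔
      H * u * α' / u' = H * v * β' / v' ∧
      d * d' - H ^ 2 * u * conj u' - conj α * α' / (conj u * u') =
        e * e' - H ^ 2 * v * conj v' - conj β * β' / (conj v * v') ∧
      H * conj α * conj u' / conj u = H * conj β * conj v' / conj v := by
  rw [← forall_ne_zero_laurent_even_eq_iff]
  exact forall₂_congr fun l hl => by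
    rw [UedgeL_mul_UedgeL_apply_zero_zero hl, UedgeL_mul_UedgeL_apply_zero_zero hl]

theorem forall_ne_zero_UedgeL_mul_UedgeL_apply_zero_one_eq_iff :
    (∀ l, l ≠ 0 → (UedgeL H d u α l * UedgeL H d' u' α' l) 0 1 =
        (UedgeL H e v β l * UedgeL H e' v' β' l) 0 1) ↔
      H * (d * u' + u * conj d') = H * (e * v' + v * conj e') ∧
      d * conj α' / conj u' + conj α * conj d' / conj u =
        e * conj β' / conj v' + conj β * conj e' / conj v := by
  simp only [UedgeL_mul_UedgeL_apply_zero_one]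
  rw [forall_ne_zero_laurent_odd_eq_iff, neg_inj]

end Entries

section Quadrilateral

variable {H : ℝ} {α1 α2 d01 d12 d32 d03 u01 u12 u32 u03 : ℂ}

theorem lambda_neg_two_coeff_eq_iff (hu01 : u01 ≠ 0) (hu03 : u03 ≠ 0) :
    H * u12 * α1 / u01 = H * u32 * α2 / u03 ↔ H * (α1 * u12 * u03 - α2 * u01 * u32) = 0 := by
  rw [div_eq_div_iff hu01 hu03]
  constructor <;> intro h <;> linear_combination h

theorem lambda_two_coeff_eq_iff (hu12 : u12 ≠ 0) (hu32 : u32 ≠ 0) :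
    H * conj α2 * conj u01 / conj u12 = H * conj α1 * conj u03 / conj u32 ↔
      H * (α1 * u12 * u03 - α2 * u01 * u32) = 0 := by
  rw [div_eq_div_iff (by simpa) (by simpa), ← map_eq_zero (starRingEnd ℂ)]
  simp only [map_mul, map_sub, conj_ofReal]
  constructor <;> intro h <;> linear_combination -h

theorem lambda_zero_coeff_eq_iff :
    d12 * d01 - H ^ 2 * u12 * conj u01 - conj α2 * α1 / (conj u12 * u01) =
        d32 * d03 - H ^ 2 * u32 * conj u03 - conj α1 * α2 / (conj u32 * u03) ↔
      (H : ℂ) ^ 2 * (conj u03 * u32 - conj u01 * u12) + d12 * d01 - d32 * d03 +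
        conj α1 * α2 / (u03 * conj u32) - α1 * conj α2 / (u01 * conj u12) = 0 := by
  constructor <;> intro h <;> linear_combination h

theorem lambda_neg_one_coeff_eq_iff :
    H * (d12 * u01 + u12 * conj d01) = H * (d32 * u03 + u32 * conj d03) ↔
      (H : ℂ) * (-(d12 * u01) - conj d01 * u12 + d32 * u03 + conj d03 * u32) = 0 := by
  constructor <;> intro h <;> linear_combination -h

theorem lambda_one_coeff_eq_iff (hu01 : u01 ≠ 0) (hu12 : u12 ≠ 0) (hu32 : u32 ≠ 0)
    (hu03 : u03 ≠ 0) :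
    d12 * conj α1 / conj u01 + conj α2 * conj d01 / conj u12 =
        d32 * conj α2 / conj u03 + conj α1 * conj d03 / conj u32 ↔
      α2 * u01 * u32 * (d01 * u03 - conj d32 * u12) =
        α1 * u12 * u03 * (d03 * u01 - conj d12 * u32) := by
  rw [← (starRingEnd ℂ).injective.eq_iff]
  simp only [map_add, map_mul, map_div₀, conj_conj]
  field_simp
  constructor <;> intro h <;> linear_combination h

end Quadrilateral

/-- The compatibility (zero-curvature) condition of the extended frame of a
discrete CMC surface around an elementary quadrilateral is equivalent to the
four listed conditions on the edge data. -/
theorem stmt12 (H : ℝ) (α1 α2 : ℂ)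
    (d01 d12 d32 d03 u01 u12 u32 u03 : ℂ)
    (hu01 : u01 ≠ 0) (hu12 : u12 ≠ 0) (hu32 : u32 ≠ 0) (hu03 : u03 ≠ 0) :
    (∀ l : ℂ, l ≠ 0 →
        UedgeL H d12 u12 α2 l * UedgeL H d01 u01 α1 l =
          UedgeL H d32 u32 α1 l * UedgeL H d03 u03 α2 l) ↔
      ((H : ℂ) ^ 2 * (starRingEnd ℂ u03 * u32 - starRingEnd ℂ u01 * u12) +
          d12 * d01 - d32 * d03 +
          starRingEnd ℂ α1 * α2 / (u03 * starRingEnd ℂ u32) -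
          α1 * starRingEnd ℂ α2 / (u01 * starRingEnd ℂ u12) = 0 ∧
        (H : ℂ) * (α1 * u12 * u03 - α2 * u01 * u32) = 0 ∧
        (H : ℂ) * (-(d12 * u01) - starRingEnd ℂ d01 * u12 +
          d32 * u03 + starRingEnd ℂ d03 * u32) = 0 ∧
        α2 * u01 * u32 * (d01 * u03 - starRingEnd ℂ d32 * u12) =
          α1 * u12 * u03 * (d03 * u01 - starRingEnd ℂ d12 * u32)) := by
  have hU (d u α : ℂ) := satisfiesReality_UedgeL H d u α
  rw [((hU _ _ _).mul (hU _ _ _)).forall_ne_zero_eq_iff ((hU _ _ _).mul (hU _ _ _)), forall₂_and,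
    forall_ne_zero_UedgeL_mul_UedgeL_apply_zero_zero_eq_iff,
    forall_ne_zero_UedgeL_mul_UedgeL_apply_zero_one_eq_iff,
    lambda_neg_two_coeff_eq_iff hu01 hu03, lambda_zero_coeff_eq_iff,
    lambda_two_coeff_eq_iff hu12 hu32, lambda_neg_one_coeff_eq_iff,
    lambda_one_coeff_eq_iff hu01 hu12 hu32 hu03]
  tauto
end

section
/- Let z*_i, z*_j ∈ ℂ with z*_i ≠ z*_j, and set c_k := 1/√(1 + |z*_k|²) for k ∈ {i, j}. For λ ∈ ℂ \ {0} define Φ_k(λ) := c_k · (matrix with rows (1, conj(z*_k)·λ) and (−z*_k·λ⁻¹, 1)). Then det Φ_k(λ) = 1 and Φ_j(λ)·Φ_i(λ)⁻¹ = c_i·c_j · (matrix with rows (1 + conj(z*_j)·z*_i, (conj(z*_j) − conj(z*_i))·λ) and ((z*_i − z*_j)·λ⁻¹, 1 + conj(z*_i)·z*_j)). Moreover, if z_i, z_j ∈ ℂ and α ∈ ℂ satisfy z*_i − z*_j = α/(z_j − z_i), then this transition matrix equals the H = 0 extended-frame matrix with rows (d, −λ·conj(α)/conj(u)) and (λ⁻¹·α/u,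 conj(d)), where u := (α/(z*_i − z*_j))·√((1 + |z*_i|²)(1 + |z*_j|²)) and d := (1 + conj(z*_j)·z*_i)/√((1 + |z*_i|²)(1 + |z*_j|²)). Hence the extended frame with mean curvature H = 0 can be solved explicitly in terms of the dual discrete holomorphic function z*. -/
open Matrix Complex ComplexConjugate

/-!
The frame `Φ_k(λ)` is `c_k` times a matrix of determinant `1 + |z*_k|²`, so `c_k` is exactly the
normalisation making it unimodular; its inverse is then its adjugate, and multiplying out gives
the transition matrix. Comparing it entrywise with the `H = 0` frame matrix only uses
`α / u = (z*_i − z*_j) / √((1 + |z*_i|²)(1 + |z*_j|²))`, valid as soon as `α ≠ 0`, which holds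
because `α / (z_j − z_i) = z*_i − z*_j ≠ 0`.
-/

noncomputable def frameScale (z : ℂ) : ℝ := 1 / √(1 + ‖z‖ ^ 2)

noncomputable def frameCore (z l : ℂ) : Matrix (Fin 2) (Fin 2) ℂ :=
  !![1, conj z * l; -z * l⁻¹, 1]

noncomputable def transitionCore (z w l : ℂ) : Matrix (Fin 2) (Fin 2) ℂ :=
  !![1 + conj w * z, (conj w - conj z) * l; (z - w) * l⁻¹, 1 + conj z * w]

noncomputable def extendedFrameH0 (α u d l : ℂ) : Matrix (Fin 2) (Fin 2) ℂ :=
  !![d, -l * conj α / conj u; l⁻¹ * α / u, conj d]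

lemma frameScale_sq_mul_one_add_conj_mul_self (z : ℂ) :
    (frameScale z : ℂ) ^ 2 * (1 + conj z * z) = 1 := by
  have hpos : (0 : ℝ) < 1 + ‖z‖ ^ 2 := by positivity
  have hreal : frameScale z ^ 2 * (1 + ‖z‖ ^ 2) = 1 := by
    rw [frameScale, div_pow, one_pow, Real.sq_sqrt hpos.le, one_div_mul_cancel hpos.ne']
  rw [conj_mul']
  exact_mod_cast hreal

lemma frameScale_mul_frameScale (z w : ℂ) :
    frameScale z * frameScale w = 1 / √((1 + ‖z‖ ^ 2) * (1 + ‖w‖ ^ 2)) := by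
  rw [frameScale, frameScale, Real.sqrt_mul (by positivity), div_mul_div_comm, one_mul]

lemma det_frameCore (z : ℂ) {l : ℂ} (hl : l ≠ 0) : (frameCore z l).det = 1 + conj z * z := by
  rw [frameCore, det_fin_two_of]
  field_simp
  ring

lemma det_frameScale_smul_frameCore (z : ℂ) {l : ℂ} (hl : l ≠ 0) :
    ((frameScale z : ℂ) • frameCore z l).det = 1 := by
  rw [det_smul, Fintype.card_fin, det_frameCore z hl, frameScale_sq_mul_one_add_conj_mul_self]

lemma inv_frameScale_smul_frameCore (z : ℂ) {l : ℂ} (hl : l ≠ 0) :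
    ((frameScale z : ℂ) • frameCore z l)⁻¹ =
      (frameScale z : ℂ) • !![1, -(conj z * l); z * l⁻¹, 1] := by
  rw [inv_def ((frameScale z : ℂ) • frameCore z l), det_frameScale_smul_frameCore z hl,
    Ring.inverse_one, one_smul, adjugate_smul, frameCore, adjugate_fin_two_of, Fintype.card_fin,
    pow_one, neg_mul, neg_neg]

lemma frameScale_smul_frameCore_mul_inv (z w : ℂ) {l : ℂ} (hl : l ≠ 0) :
    (frameScale w : ℂ) • frameCore w l * ((frameScale z : ℂ) • frameCore z l)⁻¹ =
      ((frameScale z * frameScale w : ℝ) : ℂ) • transitionCore z w l := by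
  rw [inv_frameScale_smul_frameCore z hl, Matrix.smul_mul, Matrix.mul_smul, smul_smul, frameCore,
    transitionCore, mul_fin_two, ofReal_mul, mul_comm (frameScale z : ℂ)]
  congr 1
  ext i j
  fin_cases i <;> fin_cases j <;> simp <;> field_simp <;> ring

lemma one_div_smul_transitionCore_eq_extendedFrameH0 {z w α : ℂ} (hzw : z ≠ w) (hα : α ≠ 0)
    {S : ℝ} (hS : S ≠ 0) (l : ℂ) :
    ((1 / S : ℝ) : ℂ) • transitionCore z w l =
      extendedFrameH0 α (α / (z - w) * S) ((1 + conj w * z) / S) l := by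
  have hzw' : z - w ≠ 0 := sub_ne_zero.mpr hzw
  have hzw'' : conj z - conj w ≠ 0 := by rwa [← map_sub, map_ne_zero]
  have hα' : conj α ≠ 0 := (map_ne_zero _).mpr hα
  have hS' : (S : ℂ) ≠ 0 := ofReal_ne_zero.mpr hS
  ext i j
  fin_cases i <;> fin_cases j <;> simp [transitionCore, extendedFrameH0] <;> field_simp
  ring

/-- The extended frame with mean curvature `H = 0` can be solved explicitly in
terms of the dual discrete holomorphic function `z*`: the explicit frames
`Φ_k(λ)` have determinant `1`, their transition matrix has the stated explicit
form, and, when `z*_i − z*_j = α/(z_j − z_i)`, it coincides with the `H = 0`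
extended-frame matrix with edge data `u`, `d`. -/
theorem stmt13 (zsi zsj : ℂ) (hne : zsi ≠ zsj)
    (ci cj : ℝ)
    (hci : ci = 1 / Real.sqrt (1 + ‖zsi‖ ^ 2))
    (hcj : cj = 1 / Real.sqrt (1 + ‖zsj‖ ^ 2))
    (Φi Φj : ℂ → Matrix (Fin 2) (Fin 2) ℂ)
    (hΦi : ∀ l : ℂ, Φi l = (ci : ℂ) •
      !![1, starRingEnd ℂ zsi * l; -zsi * l⁻¹, 1])
    (hΦj : ∀ l : ℂ, Φj l = (cj : ℂ) •
      !![1, starRingEnd ℂ zsj * l; -zsj * l⁻¹, 1]) :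
    ∀ l : ℂ, l ≠ 0 →
      (Φi l).det = 1 ∧ (Φj l).det = 1 ∧
      Φj l * (Φi l)⁻¹ = ((ci * cj : ℝ) : ℂ) •
        !![1 + starRingEnd ℂ zsj * zsi,
           (starRingEnd ℂ zsj - starRingEnd ℂ zsi) * l;
           (zsi - zsj) * l⁻¹, 1 + starRingEnd ℂ zsi * zsj] ∧
      (∀ zi zj α : ℂ, zsi - zsj = α / (zj - zi) →
        ∀ u d : ℂ,
          u = (α / (zsi - zsj)) *
            ((Real.sqrt ((1 + ‖zsi‖ ^ 2) * (1 + ‖zsj‖ ^ 2)) : ℝ) : ℂ) →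
          d = (1 + starRingEnd ℂ zsj * zsi) /
            ((Real.sqrt ((1 + ‖zsi‖ ^ 2) * (1 + ‖zsj‖ ^ 2)) : ℝ) : ℂ) →
          Φj l * (Φi l)⁻¹ =
            !![d, -l * starRingEnd ℂ α / starRingEnd ℂ u;
               l⁻¹ * α / u, starRingEnd ℂ d]) := by
  intro l hl
  have hΦi_l : Φi l = (frameScale zsi : ℂ) • frameCore zsi l := by rw [hΦi, hci]; rfl
  have hΦj_l : Φj l = (frameScale zsj : ℂ) • frameCore zsj l := by rw [hΦj, hcj]; rfl
  have hcc : ci * cj = frameScale zsi * frameScale zsj := by rw [hci, hcj]; rfl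
  have htrans : Φj l * (Φi l)⁻¹ = ((ci * cj : ℝ) : ℂ) • transitionCore zsi zsj l := by
    rw [hΦi_l, hΦj_l, hcc]
    exact frameScale_smul_frameCore_mul_inv zsi zsj hl
  refine ⟨hΦi_l ▸ det_frameScale_smul_frameCore zsi hl,
    hΦj_l ▸ det_frameScale_smul_frameCore zsj hl, htrans, ?_⟩
  rintro zi zj α hα u d rfl rfl
  have hα0 : α ≠ 0 := by
    rintro rfl
    exact sub_ne_zero.mpr hne (by simpa using hα)
  rw [htrans, hcc, frameScale_mul_frameScale]
  exact one_div_smul_transitionCore_eq_extendedFrameH0 hne hα0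
    (Real.sqrt_pos.mpr (by positivity)).ne' l
end

section
/- Let H ∈ ℝ be nonzero, p, q ∈ ℂ not both zero, c := (|p|² + H²|q|²)^{-1/2}, and define G, G* : ℝ → Matrix (Fin 2) (Fin 2) ℂ by G(s) := c·(matrix with rows (p, Hq·e^{√−1 s}) and (−H·conj(q)·e^{−√−1 s}, conj(p))) and G*(s) := c·(matrix with rows (p, Hq·e^{−√−1 s}) and (−H·conj(q)·e^{√−1 s}, conj(p))). Let Φ : ℝ → Matrix (Fin 2) (Fin 2) ℂ be differentiable with Φ(t) invertible for all t. Then for every t ∈ ℝ: (i) with 𝒫(s) := G(s)·Φ(s), one has 𝒫(t)⁻¹·𝒫'(t) − (√−1/2)·𝒫(t)⁻¹·σ₃·𝒫(t) = Φ(t)⁻¹·Φ'(t) − (√−1/2)·Φ(t)⁻¹·σ₃·Φ(t); and (ii) with 𝒬(s) := G*(s)·Φ(s), one has 𝒬(t)⁻¹·𝒬'(t) + (√−1/2)·𝒬(t)⁻¹·σ₃·𝒬(t) = Φ(t)⁻¹·Φ'(t) + (√−1/2)·Φ(t)⁻¹·σ₃·Φ(t). Consequently, the discrete Sym–Bobenko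 formulas f = −(1/H)(Φ⁻¹∂_tΦ − (√−1/2)Φ⁻¹σ₃Φ) and f* = −(1/H)(Φ⁻¹∂_tΦ + (√−1/2)Φ⁻¹σ₃Φ) are unchanged when the extended frame Φ is replaced by G·Φ, respectively G*·Φ (the computational core of the sub-lattice theorem: the gauged pair of extended frames produces the same CMC surface as the ungauged extended frame). -/
/-! The gauge `G` is a constant `SU(2)`-type matrix conjugated by `diag(e^{εs/2}, e^{-εs/2})`,
with `ε = √−1` for `G` and `ε = −√−1` for `G*`, so `G' = (ε/2)[σ₃, G]`. By the Leibniz rule,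
`(GΦ)⁻¹(GΦ)' = Φ⁻¹Φ' + (ε/2)(Φ⁻¹G⁻¹σ₃GΦ - Φ⁻¹σ₃Φ)`, and the first of these extra terms is exactly
absorbed by the conjugated `σ₃`-term of the gauged frame, provided `G` is invertible; the
normalization `c` makes `det G = 1`. -/

open Matrix Complex

/-- The Pauli matrix `σ₃`. -/
noncomputable def sigma3 : Matrix (Fin 2) (Fin 2) ℂ := !![1, 0; 0, -1]

/-- Entrywise derivative of a matrix-valued function of a real variable. -/
noncomputable def mderiv (A : ℝ → Matrix (Fin 2) (Fin 2) ℂ) (t : ℝ) :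
    Matrix (Fin 2) (Fin 2) ℂ :=
  Matrix.of fun i j => deriv (fun s => A s i j) t

theorem inv_mul_leibniz_sub_smul_conj_of_eq_smul_commutator {n R : Type*} [Fintype n]
    [DecidableEq n] [CommRing R] {A A' B B' S : Matrix n n R} {z : R}
    (hA : IsUnit A.det) (hA' : A' = z • (S * A - A * S)) :
    (A * B)⁻¹ * (A' * B + A * B') - z • ((A * B)⁻¹ * S * (A * B)) =
      B⁻¹ * B' - z • (B⁻¹ * S * B) := by
  have cancel (X : Matrix n n R) : A⁻¹ * (A * X) = X := by
    rw [← Matrix.mul_assoc, nonsing_inv_mul A hA, Matrix.one_mul]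
  rw [Matrix.mul_inv_rev, hA']
  simp only [Matrix.mul_add, Matrix.sub_mul, Matrix.mul_sub, smul_sub,
    mul_smul_comm, smul_mul_assoc, Matrix.mul_assoc, cancel]
  abel

theorem hasDerivAt_cexp_mul_ofReal (ε : ℂ) (t : ℝ) :
    HasDerivAt (fun s : ℝ => cexp (ε * s)) (ε * cexp (ε * t)) t := by
  simpa [mul_comm] using (((hasDerivAt_id t).ofReal_comp).const_mul ε).cexp

theorem mderiv_mul {A B : ℝ → Matrix (Fin 2) (Fin 2) ℂ}
    (hA : ∀ i j, Differentiable ℝ fun s => A s i j)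
    (hB : ∀ i j, Differentiable ℝ fun s => B s i j) (t : ℝ) :
    mderiv (fun s => A s * B s) t = mderiv A t * B t + A t * mderiv B t := by
  ext i j
  simp only [mderiv, of_apply, Matrix.add_apply, mul_apply, Fin.sum_univ_two]
  rw [deriv_fun_add (((hA i 0) t).fun_mul ((hB 0 j) t)) (((hA i 1) t).fun_mul ((hB 1 j) t)),
    deriv_fun_mul ((hA i 0) t) ((hB 0 j) t), deriv_fun_mul ((hA i 1) t) ((hB 1 j) t)]
  ring

noncomputable def twistedGauge (k a b d e ε : ℂ) (s : ℝ) : Matrix (Fin 2) (Fin 2) ℂ :=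
  k • !![a, b * cexp (ε * s); -(d * cexp (-(ε * s))), e]

section TwistedGauge

variable (k a b d e ε : ℂ)

theorem det_twistedGauge (s : ℝ) :
    (twistedGauge k a b d e ε s).det = k ^ 2 * (a * e + b * d) := by
  have hexp : cexp (ε * s) * cexp (-(ε * s)) = 1 := by rw [← Complex.exp_add]; simp
  rw [twistedGauge, det_smul, det_fin_two_of, Fintype.card_fin]
  linear_combination k ^ 2 * b * d * hexp

theorem differentiable_twistedGauge (i j : Fin 2) :
    Differentiable ℝ fun s => twistedGauge k a b d e ε s i j := by
  fin_cases i <;> fin_cases j <;>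
    simp only [twistedGauge, Matrix.smul_apply, of_apply, cons_val', cons_val_zero, cons_val_one,
      cons_val_fin_one, smul_eq_mul, Fin.zero_eta, Fin.mk_one, Fin.isValue] <;>
    fun_prop

theorem mderiv_twistedGauge (t : ℝ) :
    mderiv (twistedGauge k a b d e ε) t =
      (ε / 2) • (sigma3 * twistedGauge k a b d e ε t - twistedGauge k a b d e ε t * sigma3) := by
  have hplus := (hasDerivAt_cexp_mul_ofReal ε t).deriv
  have hminus : deriv (fun s : ℝ => cexp (-(ε * s))) t = -ε * cexp (-(ε * t)) := by
    simpa only [neg_mul] using (hasDerivAt_cexp_mul_ofReal (-ε) t).deriv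
  ext i j
  fin_cases i <;> fin_cases j <;>
    simp [mderiv, twistedGauge, sigma3, hplus, hminus] <;> ring

end TwistedGauge

theorem inv_sqrt_sq_mul_conj_add_eq_one {H : ℝ} (hH : H ≠ 0) {p q : ℂ} (hpq : p ≠ 0 ∨ q ≠ 0) :
    ((1 / √(‖p‖ ^ 2 + H ^ 2 * ‖q‖ ^ 2) : ℝ) : ℂ) ^ 2 *
      (p * starRingEnd ℂ p + H * q * (H * starRingEnd ℂ q)) = 1 := by
  have hS : 0 < ‖p‖ ^ 2 + H ^ 2 * ‖q‖ ^ 2 := by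
    rcases hpq with hp | hq
    · have := norm_pos_iff.mpr hp; positivity
    · have := norm_pos_iff.mpr hq; positivity
  have hreal : (1 / √(‖p‖ ^ 2 + H ^ 2 * ‖q‖ ^ 2)) ^ 2 * (‖p‖ ^ 2 + H ^ 2 * ‖q‖ ^ 2) = 1 := by
    rw [div_pow, one_pow, Real.sq_sqrt hS.le, one_div_mul_cancel hS.ne']
  have hcomplex := congrArg ((↑) : ℝ → ℂ) hreal
  push_cast at hcomplex ⊢
  linear_combination hcomplex + (1 / (√(‖p‖ ^ 2 + H ^ 2 * ‖q‖ ^ 2) : ℂ)) ^ 2 *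
    (mul_conj' p + (H : ℂ) ^ 2 * mul_conj' q)

theorem stmt14_general (H : ℝ) (hH : H ≠ 0) (p q : ℂ) (hpq : p ≠ 0 ∨ q ≠ 0)
    (c : ℝ) (hc : c = 1 / Real.sqrt (‖p‖ ^ 2 + H ^ 2 * ‖q‖ ^ 2))
    (G Gs : ℝ → Matrix (Fin 2) (Fin 2) ℂ)
    (hG : ∀ s : ℝ, G s = (c : ℂ) •
      !![p, (H : ℂ) * q * Complex.exp (I * s);
         -((H : ℂ) * starRingEnd ℂ q * Complex.exp (-(I * s))), starRingEnd ℂ p])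
    (hGs : ∀ s : ℝ, Gs s = (c : ℂ) •
      !![p, (H : ℂ) * q * Complex.exp (-(I * s));
         -((H : ℂ) * starRingEnd ℂ q * Complex.exp (I * s)), starRingEnd ℂ p])
    (Φ : ℝ → Matrix (Fin 2) (Fin 2) ℂ)
    (hΦdiff : ∀ i j, Differentiable ℝ fun s => Φ s i j)
    (t : ℝ) :
    ((G t * Φ t)⁻¹ * mderiv (fun s => G s * Φ s) t -
        (I / 2) • ((G t * Φ t)⁻¹ * sigma3 * (G t * Φ t)) =
      (Φ t)⁻¹ * mderiv Φ t - (I / 2) • ((Φ t)⁻¹ * sigma3 * Φ t)) ∧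
    ((Gs t * Φ t)⁻¹ * mderiv (fun s => Gs s * Φ s) t +
        (I / 2) • ((Gs t * Φ t)⁻¹ * sigma3 * (Gs t * Φ t)) =
      (Φ t)⁻¹ * mderiv Φ t + (I / 2) • ((Φ t)⁻¹ * sigma3 * Φ t)) := by
  have hdet := inv_sqrt_sq_mul_conj_add_eq_one hH hpq
  rw [← hc] at hdet
  have hunit (ε : ℂ) :
      IsUnit (twistedGauge c p (H * q) (H * starRingEnd ℂ q) (starRingEnd ℂ p) ε t).det := by
    rw [det_twistedGauge, hdet]
    exact isUnit_one
  obtain rfl : G = twistedGauge c p (H * q) (H * starRingEnd ℂ q) (starRingEnd ℂ p) I :=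
    funext hG
  obtain rfl : Gs = twistedGauge c p (H * q) (H * starRingEnd ℂ q) (starRingEnd ℂ p) (-I) :=
    funext fun s => by simpa only [twistedGauge, neg_mul, neg_neg] using hGs s
  constructor
  · rw [mderiv_mul (differentiable_twistedGauge _ _ _ _ _ _) hΦdiff]
    exact inv_mul_leibniz_sub_smul_conj_of_eq_smul_commutator (hunit I)
      (mderiv_twistedGauge _ _ _ _ _ _ t)
  · rw [mderiv_mul (differentiable_twistedGauge _ _ _ _ _ _) hΦdiff]
    have h := inv_mul_leibniz_sub_smul_conj_of_eq_smul_commutator (B := Φ t) (B' := mderiv Φ t)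
      (hunit (-I)) (mderiv_twistedGauge _ _ _ _ _ _ t)
    rwa [neg_div, neg_smul, sub_neg_eq_add, neg_smul, sub_neg_eq_add] at h

/-- Computational core of the sub-lattice theorem: the discrete Sym–Bobenko
formulas are unchanged when the extended frame `Φ` is replaced by the gauged
frames `G·Φ` (for the primal formula) and `G*·Φ` (for the dual formula). -/
theorem stmt14 (H : ℝ) (hH : H ≠ 0) (p q : ℂ) (hpq : p ≠ 0 ∨ q ≠ 0)
    (c : ℝ) (hc : c = 1 / Real.sqrt (‖p‖ ^ 2 + H ^ 2 * ‖q‖ ^ 2))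
    (G Gs : ℝ → Matrix (Fin 2) (Fin 2) ℂ)
    (hG : ∀ s : ℝ, G s = (c : ℂ) •
      !![p, (H : ℂ) * q * Complex.exp (I * s);
         -((H : ℂ) * starRingEnd ℂ q * Complex.exp (-(I * s))), starRingEnd ℂ p])
    (hGs : ∀ s : ℝ, Gs s = (c : ℂ) •
      !![p, (H : ℂ) * q * Complex.exp (-(I * s));
         -((H : ℂ) * starRingEnd ℂ q * Complex.exp (I * s)), starRingEnd ℂ p])
    (Φ : ℝ → Matrix (Fin 2) (Fin 2) ℂ)
    (hΦdiff : ∀ i j, Differentiable ℝ fun s => Φ s i j)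
    (hΦinv : ∀ s, IsUnit (Φ s)) (t : ℝ) :
    ((G t * Φ t)⁻¹ * mderiv (fun s => G s * Φ s) t -
        (I / 2) • ((G t * Φ t)⁻¹ * sigma3 * (G t * Φ t)) =
      (Φ t)⁻¹ * mderiv Φ t - (I / 2) • ((Φ t)⁻¹ * sigma3 * Φ t)) ∧
    ((Gs t * Φ t)⁻¹ * mderiv (fun s => Gs s * Φ s) t +
        (I / 2) • ((Gs t * Φ t)⁻¹ * sigma3 * (Gs t * Φ t)) =
      (Φ t)⁻¹ * mderiv Φ t + (I / 2) • ((Φ t)⁻¹ * sigma3 * Φ t)) :=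
  stmt14_general H hH p q hpq c hc G Gs hG hGs Φ hΦdiff t
end
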